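/- Bottleneck distance bounded by Betti-0 interleaving: let (X,d_X) and (Y,d_Y) be finite metric spaces with |X| = m ≤ |Y| = n. Let the death times of the 0-th persistence diagram of the Rips filtration of X (excluding the essential class) be a₁ ≤ … ≤ a_{m−1} and those of Y be b₁ ≤ … ≤ b_{n−1}, characterized by: a_{m−k} is the minimal δ with β₀^X(δ) ≤ k for k = 1, …, m−1, where β₀^X(δ) is the number of connected components of the graph on X with edges {x,x'} whenever d_X(x,x') ≤ δ. If ε ≥ 0 satisfies β₀^X(δ + ε) ≤ β₀^Y(δ) and β₀^Y(δ + ε) ≤ β₀^X(δ) for all δ ≥ 0, then, padding (a_i) with n−m zeros at the front to get a'₁ ≤ … ≤ a'_{n−1}, one has |a'_i − b_i| ≤ ε for all i = 1, …, n−1. -/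
import Mathlib


namespace Stmt12

/-- if the Betti-0 functions of two finite metric spaces are
`ε`-interleaved, then after padding the sorted death times of `X` with `n−m`
zeros, corresponding death times differ by at most `ε`. -/
theorem death_times_matched_by_betti0_interleaving
    (m n : ℕ) (hm : 1 ≤ m) (hmn : m ≤ n)
    (βX βY : ℝ → ℕ)
    (hβX_anti : ∀ δ δ' : ℝ, 0 ≤ δ → δ ≤ δ' → βX δ' ≤ βX δ)
    (hβY_anti : ∀ δ δ' : ℝ, 0 ≤ δ → δ ≤ δ' → βY δ' ≤ βY δ)
    (hβX0 : βX 0 = m) (hβY0 : βY 0 = n)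
    (a b : ℕ → ℝ)
    (ha_nonneg : ∀ i, 0 ≤ a i) (hb_nonneg : ∀ i, 0 ≤ b i)
    (ha_mono : ∀ i j, 1 ≤ i → i ≤ j → j ≤ m - 1 → a i ≤ a j)
    (hb_mono : ∀ i j, 1 ≤ i → i ≤ j → j ≤ n - 1 → b i ≤ b j)
    -- `a_{m−k}` is the minimal `δ ≥ 0` with `β₀^X(δ) ≤ k`, for `k = 1, …, m−1`:
    (ha_char : ∀ k, 1 ≤ k → k ≤ m - 1 →
      βX (a (m - k)) ≤ k ∧ ∀ δ : ℝ, 0 ≤ δ → βX δ ≤ k → a (m - k) ≤ δ)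
    (hb_char : ∀ k, 1 ≤ k → k ≤ n - 1 →
      βY (b (n - k)) ≤ k ∧ ∀ δ : ℝ, 0 ≤ δ → βY δ ≤ k → b (n - k) ≤ δ)
    (ε : ℝ) (hε : 0 ≤ ε)
    (hinter : ∀ δ : ℝ, 0 ≤ δ → βX (δ + ε) ≤ βY δ ∧ βY (δ + ε) ≤ βX δ) :
    ∀ i, 1 ≤ i → i ≤ n - 1 →
      |(if i ≤ n - m then (0 : ℝ) else a (i - (n - m))) - b i| ≤ ε := by
  intro i hi1 hin
  set k := n - i with hk
  have hk1 : 1 ≤ k := by omega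
  have hkn : k ≤ n - 1 := by omega
  have hbC := hb_char k hk1 hkn
  have hnki : n - k = i := by omega
  rw [hnki] at hbC
  by_cases hcase : i ≤ n - m
  · -- padded zero case: k ≥ m, so βY(ε) ≤ m ≤ k, hence b i ≤ ε.
    rw [if_pos hcase]
    have hmk : m ≤ k := by omega
    have hYε : βY (0 + ε) ≤ βX 0 := (hinter 0 le_rfl).2
    rw [zero_add, hβX0] at hYε
    have hbε : b i ≤ ε := hbC.2 ε hε (le_trans hYε hmk)
    have := hb_nonneg i
    rw [abs_le]; constructor <;> linarith
  · rw [if_neg hcase]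
    have hkm : k ≤ m - 1 := by omega
    have haC := ha_char k hk1 hkm
    have hmki : m - k = i - (n - m) := by omega
    rw [hmki] at haC
    -- a' ≤ b + ε
    have h1 : a (i - (n - m)) ≤ b i + ε := by
      have hX := (hinter (b i) (hb_nonneg i)).1
      exact haC.2 _ (by linarith [hb_nonneg i]) (le_trans hX hbC.1)
    -- b ≤ a' + ε
    have h2 : b i ≤ a (i - (n - m)) + ε := by
      have hY := (hinter (a (i - (n - m))) (ha_nonneg _)).2
      exact hbC.2 _ (by linarith [ha_nonneg (i - (n - m))]) (le_trans hY haC.1)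
    rw [abs_le]; constructor <;> linarith

end Stmt12
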